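/- arXiv:2601.07997 — 4 statements merged into one kernel-verified Lean document; each statement's English description precedes it below -/
import Mathlib

section
/- Let (c(t)) be a nonnegative square-summable sequence and (Ψ_t) a sequence of m×m symmetric positive definite matrices with eigenvalues uniformly bounded above by ρ_Ψ and, for all t beyond some T_c, satisfying c(t)‖Ψ_t‖ < 1. Then the products Φ(t,k) = ∏_{j=k}^{t} (I - c(j)Ψ_j) are uniformly bounded in operator norm: there exists ρ_Φ > 0 with ‖Φ(t,k)‖² ≤ ρ_Φ for all t ≥ k. -/
open Matrix Finset
open scoped Matrix.Norms.L2Operator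

/-!
For `t ≥ Tc` the factor `1 - c t • Ψ t` is a contraction: `c t • Ψ t` is positive semidefinite
of norm at most `2`, so the self-adjoint `1 - c t • Ψ t` has spectrum in `[-1, 1]`, and the norm
of a self-adjoint element is its spectral radius. By submultiplicativity, `‖Φ(t,k)‖` is then
bounded by the product, over the finitely many indices below `Tc`, of the norms of the factors
rounded up to `1`.
-/

theorem norm_one_sub_le_one_of_nonneg {A : Type*} [NormedRing A] [StarRing A] [CStarRing A]
    [CompleteSpace A] [NormedAlgebra ℝ A] [PartialOrder A] [StarOrderedRing A]
    [IsometricContinuousFunctionalCalculus ℝ A IsSelfAdjoint] [NonnegSpectrumClass ℝ A]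
    {a : A} (ha : 0 ≤ a) (h : ‖a‖ ≤ 2) : ‖1 - a‖ ≤ 1 := by
  nontriviality A
  rw [← cfc_id' ℝ a, ← cfc_const_one ℝ a, ← cfc_sub (fun _ : ℝ => 1) (fun x => x)]
  refine norm_cfc_le zero_le_one fun x hx => ?_
  have hx_nonneg : 0 ≤ x := spectrum_nonneg_of_nonneg ha hx
  have hx_le : x ≤ 2 := (Real.le_norm_self x).trans ((spectrum.norm_le_norm_of_mem hx).trans h)
  rw [Real.norm_eq_abs, abs_le]
  constructor <;> linarith

theorem Matrix.PosSemidef.norm_one_sub_smul_le_one {n : Type*} [Fintype n] [DecidableEq n]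
    {Ψ : Matrix n n ℝ} (hΨ : Ψ.PosSemidef) {c : ℝ} (hc : 0 ≤ c) (h : c * ‖Ψ‖ ≤ 2) :
    ‖1 - c • Ψ‖ ≤ 1 := by
  open scoped MatrixOrder in
  have hcΨ : (0 : Matrix n n ℝ) ≤ c • Ψ := smul_nonneg hc hΨ.nonneg
  refine norm_one_sub_le_one_of_nonneg hcΨ ?_
  rwa [norm_smul, Real.norm_of_nonneg hc]

theorem norm_le_prod_Icc_norm_of_succ_eq_mul {R : Type*} [SeminormedRing R] {a : ℕ → R}
    {Φ : ℕ → ℕ → R} (h_empty : ∀ t, Φ t (t + 1) = 1) (h_base : Φ 0 0 = a 0)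
    (h_rec : ∀ t k, k ≤ t + 1 → Φ (t + 1) k = a (t + 1) * Φ t k) :
    ∀ t k, k ≤ t → ‖Φ t k‖ ≤ ∏ j ∈ Icc k t, ‖a j‖ := by
  intro t
  induction t with
  | zero =>
    intro k hk
    obtain rfl : k = 0 := Nat.le_zero.mp hk
    simp [h_base]
  | succ t ih =>
    intro k hk
    rw [h_rec t k hk]
    rcases hk.lt_or_eq with hk | rfl
    · calc ‖a (t + 1) * Φ t k‖ ≤ ‖a (t + 1)‖ * ‖Φ t k‖ := norm_mul_le _ _
        _ ≤ ‖a (t + 1)‖ * ∏ j ∈ Icc k t, ‖a j‖ := by gcongr; exact ih k (by omega)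
        _ = ∏ j ∈ Icc k (t + 1), ‖a j‖ := by
          rw [prod_Icc_succ_top (by omega), mul_comm]
    · simp [h_empty]

theorem prod_le_prod_range_max_one {f : ℕ → ℝ} {T : ℕ} (hf_nonneg : ∀ j, 0 ≤ f j)
    (hf_le_one : ∀ j, T ≤ j → f j ≤ 1) (s : Finset ℕ) :
    ∏ j ∈ s, f j ≤ ∏ j ∈ range T, max (f j) 1 :=
  calc ∏ j ∈ s, f j ≤ ∏ j ∈ s, max (f j) 1 :=
        prod_le_prod (fun j _ => hf_nonneg j) fun j _ => le_max_left _ _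
    _ ≤ ∏ j ∈ s ∪ range T, max (f j) 1 :=
        prod_le_prod_of_subset_of_one_le subset_union_left (fun j _ => by positivity)
          fun j _ _ => le_max_right _ _
    _ = ∏ j ∈ range T, max (f j) 1 := by
        refine (prod_subset subset_union_right fun j _ hj => ?_).symm
        exact max_eq_right (hf_le_one j (by simpa using hj))

theorem matrix_products_uniformly_bounded_general {m : ℕ}
    (c : ℕ → ℝ) (hc : ∀ t, 0 ≤ c t)
    (Ψ : ℕ → Matrix (Fin m) (Fin m) ℝ) (hΨpos : ∀ t, (Ψ t).PosDef)
    (Tc : ℕ) (hTc : ∀ t, Tc ≤ t → c t * ‖Ψ t‖ < 1)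
    (Φ : ℕ → ℕ → Matrix (Fin m) (Fin m) ℝ)
    (hΦ_empty : ∀ t k, t < k → Φ t k = 1)
    (hΦ_base : Φ 0 0 = 1 - c 0 • Ψ 0)
    (hΦ_rec : ∀ t k, k ≤ t + 1 → Φ (t + 1) k = (1 - c (t + 1) • Ψ (t + 1)) * Φ t k) :
    ∃ ρΦ > 0, ∀ k t : ℕ, k ≤ t → ‖Φ t k‖ ^ 2 ≤ ρΦ := by
  have h_contract : ∀ t, Tc ≤ t → ‖1 - c t • Ψ t‖ ≤ 1 := fun t ht =>
    (hΨpos t).posSemidef.norm_one_sub_smul_le_one (hc t) ((hTc t ht).le.trans one_le_two)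
  have h_bound : ∀ k t, k ≤ t → ‖Φ t k‖ ≤ ∏ j ∈ range Tc, max ‖1 - c j • Ψ j‖ 1 :=
    fun k t hkt =>
      (norm_le_prod_Icc_norm_of_succ_eq_mul (fun t => hΦ_empty t (t + 1) t.lt_succ_self)
        hΦ_base hΦ_rec t k hkt).trans
      (prod_le_prod_range_max_one (fun _ => norm_nonneg _) h_contract _)
  exact ⟨_, by positivity, fun k t hkt => pow_le_pow_left₀ (norm_nonneg _) (h_bound k t hkt) 2⟩

/-- Let `c` be nonnegative and square-summable and `Ψ t` symmetric positive definite
matrices with `‖Ψ t‖ ≤ ρΨ`, such that `c t * ‖Ψ t‖ < 1` for all `t ≥ Tc`.  Then the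
ordered products `Φ(t,k) = ∏_{j=k}^{t} (I - c j • Ψ j)` (factors in decreasing index
order, with `Φ(t,k) = I` for `t < k`) are uniformly bounded:
`∃ ρΦ > 0, ‖Φ(t,k)‖² ≤ ρΦ` for all `t ≥ k`. -/
theorem matrix_products_uniformly_bounded {m : ℕ}
    (c : ℕ → ℝ) (hc : ∀ t, 0 ≤ c t) (hc2 : Summable fun t => (c t) ^ 2)
    (Ψ : ℕ → Matrix (Fin m) (Fin m) ℝ) (hΨpos : ∀ t, (Ψ t).PosDef)
    (ρΨ : ℝ) (hρΨ : ∀ t, ‖Ψ t‖ ≤ ρΨ)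
    (Tc : ℕ) (hTc : ∀ t, Tc ≤ t → c t * ‖Ψ t‖ < 1)
    (Φ : ℕ → ℕ → Matrix (Fin m) (Fin m) ℝ)
    (hΦ_empty : ∀ t k, t < k → Φ t k = 1)
    (hΦ_base : Φ 0 0 = 1 - c 0 • Ψ 0)
    (hΦ_rec : ∀ t k, k ≤ t + 1 → Φ (t + 1) k = (1 - c (t + 1) • Ψ (t + 1)) * Φ t k) :
    ∃ ρΦ > 0, ∀ k t : ℕ, k ≤ t → ‖Φ t k‖ ^ 2 ≤ ρΦ :=
  matrix_products_uniformly_bounded_general c hc Ψ hΨpos Tc hTc Φ hΦ_empty hΦ_base hΦ_rec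
end

section
/- Gaussian mechanism privacy bound: let M : D → ℝ^n be a deterministic query with ℓ²-sensitivity Δ = max over adjacent databases of ‖M(D) - M(D')‖. If η has i.i.d. N(0, σ²) components with σ ≥ Δ / (√(Q⁻¹(δ)² + 2ε) - Q⁻¹(δ)), then the mechanism M(D) + η is (ε, δ)-differentially private: for every measurable S ⊆ ℝ^n and all adjacent D, D', P[M(D)+η ∈ S] ≤ e^ε P[M(D')+η ∈ S] + δ. -/
/-
With `v = M d - M d'`, the density of `M d + η` is at most `e^ε` times that of `M d' + η`
exactly on the half-space `{y | ⟪v, y - M d⟫ ≤ εσ² - ‖v‖²/2}`, since the log-ratio of the two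
densities is affine in `y`. Its complement has probability `Q((εσ² - ‖v‖²/2) / (σ‖v‖))` because
`⟪v, η⟫` is `N(0, σ²‖v‖²)`, and the condition on `σ` makes this argument at least `q = Q⁻¹(δ)`.
-/

open MeasureTheory

/-- The standard Gaussian tail function `Q(x) = (1/√(2π)) ∫_x^∞ e^{-u²/2} du`. -/
noncomputable def gaussQ (x : ℝ) : ℝ :=
  (Real.sqrt (2 * Real.pi))⁻¹ * ∫ u in Set.Ioi x, Real.exp (-u ^ 2 / 2)

/-- The i.i.d. `N(0, σ²)` noise distribution on `ℝⁿ`. -/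
noncomputable def gaussNoise (n : ℕ) (σ : ℝ) : Measure (EuclideanSpace ℝ (Fin n)) :=
  (Measure.pi fun _ : Fin n => ProbabilityTheory.gaussianReal 0 (σ ^ 2).toNNReal).map
    ⇑(EuclideanSpace.equiv (Fin n) ℝ).symm

open ProbabilityTheory Real Set
open scoped ENNReal NNReal RealInnerProductSpace

theorem MeasureTheory.lintegral_fin_prod_eq_prod {n : ℕ} {α : Type*} [MeasurableSpace α]
    (μ : Fin n → Measure α) [∀ i, SigmaFinite (μ i)] {f : Fin n → α → ℝ≥0∞}
    (hf : ∀ i, Measurable (f i)) :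
    ∫⁻ x, ∏ i, f i (x i) ∂Measure.pi μ = ∏ i, ∫⁻ x, f i x ∂μ i := by
  induction n with
  | zero => simp
  | succ n ih =>
    rw [← (measurePreserving_piFinSuccAbove μ 0).symm.lintegral_comp_emb
      (MeasurableEquiv.measurableEmbedding _)]
    simp_rw [Fin.prod_univ_succ, MeasurableEquiv.piFinSuccAbove_symm_apply, Fin.insertNthEquiv,
      Fin.zero_succAbove]
    simp only [Equiv.coe_fn_mk, Fin.insertNth_zero', Fin.cons_zero, Fin.cons_succ]
    have hrest : Measurable fun y : Fin n → α => ∏ i, f i.succ (y i) := by fun_prop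
    rw [lintegral_prod_mul (hf 0).aemeasurable hrest.aemeasurable, ih _ fun i => hf i.succ]

theorem MeasureTheory.Measure.pi_withDensity {n : ℕ} {α : Type*} [MeasurableSpace α]
    (μ : Fin n → Measure α) [∀ i, SigmaFinite (μ i)] {f : Fin n → α → ℝ≥0∞}
    (hf : ∀ i, Measurable (f i)) [∀ i, SigmaFinite ((μ i).withDensity (f i))] :
    Measure.pi (fun i => (μ i).withDensity (f i)) =
      (Measure.pi μ).withDensity fun x => ∏ i, f i (x i) := by
  refine Measure.pi_eq fun s hs => ?_
  rw [withDensity_apply _ (.univ_pi hs), Measure.restrict_pi_pi,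
    lintegral_fin_prod_eq_prod _ hf]
  simp_rw [withDensity_apply _ (hs _)]

theorem MeasurableEquiv.map_withDensity {α β : Type*} [MeasurableSpace α] [MeasurableSpace β]
    (e : α ≃ᵐ β) (μ : Measure α) {g : α → ℝ≥0∞} (hg : Measurable g) :
    (μ.withDensity g).map e = (μ.map e).withDensity (g ∘ e.symm) := by
  ext s hs
  rw [e.map_apply, withDensity_apply _ (e.measurable hs), withDensity_apply _ hs,
    Measure.restrict_map e.measurable hs, lintegral_map (hg.comp e.symm.measurable) e.measurable]
  simp

lemma gaussianReal_zero_sq_eq_map (s : ℝ) :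
    gaussianReal 0 (s ^ 2).toNNReal = (gaussianReal 0 1).map (s * ·) := by
  rw [gaussianReal_map_const_mul, mul_zero, mul_one]
  congr
  ext
  simp [sq_nonneg]

lemma gaussianReal_Ioi_eq_gaussQ (r : ℝ) :
    gaussianReal 0 1 (Ioi r) = ENNReal.ofReal (gaussQ r) := by
  rw [gaussianReal_apply_eq_integral _ one_ne_zero, gaussQ, ← integral_const_mul]
  congr 2 with x
  simp [gaussianPDFReal]

lemma gaussNoise_eq_map_stdGaussian (n : ℕ) (σ : ℝ) :
    gaussNoise n σ = (stdGaussian (EuclideanSpace ℝ (Fin n))).map (σ • ·) := by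
  rw [← map_pi_eq_stdGaussian, Measure.map_map (by fun_prop) (by fun_prop), gaussNoise]
  simp_rw [gaussianReal_zero_sq_eq_map]
  rw [← Measure.pi_map_pi (fun _ => by fun_prop), Measure.map_map (by fun_prop) (by fun_prop)]
  rfl

lemma gaussNoise_map_inner (n : ℕ) (σ : ℝ) (v : EuclideanSpace ℝ (Fin n)) :
    (gaussNoise n σ).map (⟪v, ·⟫) = gaussianReal 0 ((σ * ‖v‖) ^ 2).toNNReal := by
  have hL : (fun x => ⟪v, x⟫) ∘ (σ • ·) = ⇑(innerSL ℝ (σ • v)) := by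
    ext x; simp [real_inner_smul_right]
  rw [gaussNoise_eq_map_stdGaussian, Measure.map_map (by fun_prop) (by fun_prop), hL,
    IsGaussian.map_eq_gaussianReal, integral_strongDual_stdGaussian,
    variance_dual_stdGaussian, innerSL_apply_norm, norm_smul, Real.norm_eq_abs, mul_pow, sq_abs,
    mul_pow]

lemma gaussNoise_setOf_lt_inner {n : ℕ} {σ : ℝ} (hσ : 0 < σ) {v : EuclideanSpace ℝ (Fin n)}
    (hv : v ≠ 0) (t : ℝ) :
    gaussNoise n σ {x | t < ⟪v, x⟫} = gaussianReal 0 1 (Ioi (t / (σ * ‖v‖))) := by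
  have hs : 0 < σ * ‖v‖ := by positivity
  rw [show {x | t < ⟪v, x⟫} = (⟪v, ·⟫) ⁻¹' Ioi t from rfl,
    ← Measure.map_apply (by fun_prop) measurableSet_Ioi, gaussNoise_map_inner,
    gaussianReal_zero_sq_eq_map, Measure.map_apply (by fun_prop) measurableSet_Ioi]
  congr 1
  ext x
  simp [div_lt_iff₀' hs]

noncomputable def gaussDensity (n : ℕ) (σ : ℝ) (x : EuclideanSpace ℝ (Fin n)) : ℝ≥0∞ :=
  ENNReal.ofReal ((√(2 * π * σ ^ 2))⁻¹ ^ n * exp (-‖x‖ ^ 2 / (2 * σ ^ 2)))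

@[fun_prop]
lemma measurable_gaussDensity (n : ℕ) (σ : ℝ) : Measurable (gaussDensity n σ) := by
  unfold gaussDensity; fun_prop

lemma gaussDensity_eq_prod (n : ℕ) (σ : ℝ) (x : EuclideanSpace ℝ (Fin n)) :
    gaussDensity n σ x = ∏ i, gaussianPDF 0 (σ ^ 2).toNNReal (x i) := by
  simp_rw [gaussianPDF, gaussianPDFReal, Real.coe_toNNReal _ (sq_nonneg σ), sub_zero]
  rw [← ENNReal.ofReal_prod_of_nonneg fun i _ => by positivity, Finset.prod_mul_distrib,
    ← exp_sum, Finset.prod_const, Finset.card_univ, Fintype.card_fin, gaussDensity,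
    EuclideanSpace.real_norm_sq_eq, neg_div, Finset.sum_div, ← Finset.sum_neg_distrib]
  simp_rw [neg_div]

lemma gaussNoise_eq_withDensity (n : ℕ) {σ : ℝ} (hσ : σ ≠ 0) :
    gaussNoise n σ = volume.withDensity (gaussDensity n σ) := by
  have hv : (σ ^ 2).toNNReal ≠ 0 := by simpa using hσ
  have hpdf := gaussianReal_of_var_ne_zero 0 hv
  have : SigmaFinite (volume.withDensity (gaussianPDF 0 (σ ^ 2).toNNReal)) :=
    hpdf ▸ inferInstance
  rw [gaussNoise, hpdf, Measure.pi_withDensity _ fun _ => measurable_gaussianPDF _ _,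
    ← volume_pi,
    show ⇑(EuclideanSpace.equiv (Fin n) ℝ).symm = MeasurableEquiv.toLp 2 (Fin n → ℝ) from rfl,
    MeasurableEquiv.map_withDensity _ _ (by fun_prop),
    MeasurableEquiv.coe_toLp, (PiLp.volume_preserving_toLp (Fin n)).map_eq]
  congr 1
  funext x
  rw [gaussDensity_eq_prod]
  rfl

lemma gaussNoise_preimage_add {n : ℕ} {σ : ℝ} (hσ : σ ≠ 0) (a : EuclideanSpace ℝ (Fin n))
    {S : Set (EuclideanSpace ℝ (Fin n))} (hS : MeasurableSet S) :
    gaussNoise n σ {x | a + x ∈ S} = ∫⁻ y in S, gaussDensity n σ (y - a) := by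
  rw [show {x | a + x ∈ S} = (a + ·) ⁻¹' S from rfl, gaussNoise_eq_withDensity n hσ,
    withDensity_apply _ (measurable_const_add a hS),
    ← ((measurePreserving_add_left volume a).restrict_preimage hS).lintegral_comp (by fun_prop)]
  simp_rw [add_sub_cancel_left]

lemma gaussDensity_sub_le {n : ℕ} {σ : ℝ} (hσ : σ ≠ 0) {a b y : EuclideanSpace ℝ (Fin n)}
    {ε : ℝ} (hy : ⟪a - b, y - a⟫ ≤ ε * σ ^ 2 - ‖a - b‖ ^ 2 / 2) :
    gaussDensity n σ (y - a) ≤ ENNReal.ofReal (exp ε) * gaussDensity n σ (y - b) := by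
  have hnorm : ‖y - b‖ ^ 2 = ‖y - a‖ ^ 2 + 2 * ⟪a - b, y - a⟫ + ‖a - b‖ ^ 2 := by
    rw [show y - b = (y - a) + (a - b) by abel, norm_add_sq_real, real_inner_comm]
  have hexp : -‖y - a‖ ^ 2 / (2 * σ ^ 2) ≤ ε + -‖y - b‖ ^ 2 / (2 * σ ^ 2) := by
    rw [show ε = 2 * σ ^ 2 * ε / (2 * σ ^ 2) by field_simp, ← add_div]
    gcongr
    linarith
  rw [gaussDensity, gaussDensity, ← ENNReal.ofReal_mul (exp_pos ε).le, mul_left_comm,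
    ← exp_add]
  gcongr

lemma gaussNoise_preimage_add_le {n : ℕ} {σ : ℝ} (hσ : σ ≠ 0)
    (a b : EuclideanSpace ℝ (Fin n)) {S : Set (EuclideanSpace ℝ (Fin n))} (hS : MeasurableSet S)
    (ε : ℝ) :
    gaussNoise n σ {x | a + x ∈ S} ≤
      ENNReal.ofReal (exp ε) * gaussNoise n σ {x | b + x ∈ S} +
        gaussNoise n σ {x | ε * σ ^ 2 - ‖a - b‖ ^ 2 / 2 < ⟪a - b, x⟫} := by
  set G := {y | ⟪a - b, y - a⟫ ≤ ε * σ ^ 2 - ‖a - b‖ ^ 2 / 2}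
  have hG : MeasurableSet G := measurableSet_le (by fun_prop) measurable_const
  rw [gaussNoise_preimage_add hσ a hS, gaussNoise_preimage_add hσ b hS,
    ← lintegral_inter_add_sdiff _ S hG]
  gcongr
  · calc ∫⁻ y in S ∩ G, gaussDensity n σ (y - a)
        ≤ ∫⁻ y in S ∩ G, ENNReal.ofReal (exp ε) * gaussDensity n σ (y - b) :=
          setLIntegral_mono (by fun_prop) fun y hy => gaussDensity_sub_le hσ hy.2
      _ ≤ ∫⁻ y in S, ENNReal.ofReal (exp ε) * gaussDensity n σ (y - b) :=
          lintegral_mono_set inter_subset_left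
      _ = ENNReal.ofReal (exp ε) * ∫⁻ y in S, gaussDensity n σ (y - b) :=
          lintegral_const_mul _ (by fun_prop)
  · calc ∫⁻ y in S \ G, gaussDensity n σ (y - a)
        ≤ ∫⁻ y in Gᶜ, gaussDensity n σ (y - a) := lintegral_mono_set fun y hy => hy.2
      _ = gaussNoise n σ {x | ε * σ ^ 2 - ‖a - b‖ ^ 2 / 2 < ⟪a - b, x⟫} := by
          rw [← gaussNoise_preimage_add hσ a hG.compl]
          simp [G]

/-- `σ (√(q² + 2ε) - q)` is the positive root of `c ↦ c² + 2qσc - 2εσ²`. -/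
lemma le_div_of_le_mul_sqrt_sq_add_sub {q ε σ c : ℝ} (hε : 0 ≤ ε) (hσ : 0 < σ)
    (hc : 0 < c) (hcσ : c ≤ σ * (√(q ^ 2 + 2 * ε) - q)) :
    q ≤ (ε * σ ^ 2 - c ^ 2 / 2) / (σ * c) := by
  set s := √(q ^ 2 + 2 * ε)
  have hs : s ^ 2 = q ^ 2 + 2 * ε := sq_sqrt (by positivity)
  have hqs : -s ≤ q := neg_le_of_abs_le (abs_le_sqrt (by linarith))
  rw [le_div_iff₀ (by positivity)]
  nlinarith [mul_nonneg (sub_nonneg.2 hcσ) (by nlinarith : 0 ≤ σ * (s + q) + c)]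

theorem gaussian_mechanism_dp_general {D : Type*} (Adj : D → D → Prop)
    {n : ℕ} (M : D → EuclideanSpace ℝ (Fin n)) (Δ : ℝ)
    (hΔ : ∀ d d' : D, Adj d d' → ‖M d - M d'‖ ≤ Δ)
    (ε δ : ℝ) (hε : 0 < ε)
    (q : ℝ) (hq : gaussQ q = δ)
    (σ : ℝ) (hσpos : 0 < σ)
    (hσ : Δ / (Real.sqrt (q ^ 2 + 2 * ε) - q) ≤ σ) :
    ∀ S : Set (EuclideanSpace ℝ (Fin n)), MeasurableSet S →
      ∀ d d' : D, Adj d d' →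
        gaussNoise n σ {x | M d + x ∈ S} ≤
          ENNReal.ofReal (Real.exp ε) * gaussNoise n σ {x | M d' + x ∈ S} +
            ENNReal.ofReal δ := by
  intro S hS d d' hadj
  have hr : 0 < √(q ^ 2 + 2 * ε) - q :=
    sub_pos.2 (lt_sqrt_of_sq_lt (by linarith))
  have hvσ : ‖M d - M d'‖ ≤ σ * (√(q ^ 2 + 2 * ε) - q) :=
    (hΔ d d' hadj).trans ((div_le_iff₀ hr).1 hσ)
  refine (gaussNoise_preimage_add_le hσpos.ne' (M d) (M d') hS ε).trans ?_
  gcongr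
  rcases eq_or_ne (M d - M d') 0 with hv | hv
  · have hεσ : ¬ε * σ ^ 2 < 0 := not_lt.2 (by positivity)
    simp [hv, hεσ]
  · rw [gaussNoise_setOf_lt_inner hσpos hv, ← hq, ← gaussianReal_Ioi_eq_gaussQ]
    exact measure_mono (Ioi_subset_Ioi
      (le_div_of_le_mul_sqrt_sq_add_sub hε.le hσpos (norm_pos_iff.2 hv) hvσ))

/-- Gaussian mechanism (Lemma 3): if `M` has `ℓ²`-sensitivity at most `Δ` over
adjacent databases and `σ ≥ Δ / (√(Q⁻¹(δ)² + 2ε) - Q⁻¹(δ))`, then the mechanism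
`M(D) + η` with `η ~ N(0, σ² Iₙ)` is `(ε, δ)`-differentially private. -/
theorem gaussian_mechanism_dp {D : Type*} (Adj : D → D → Prop) (hAdj : Symmetric Adj)
    {n : ℕ} (M : D → EuclideanSpace ℝ (Fin n)) (Δ : ℝ)
    (hΔ : ∀ d d' : D, Adj d d' → ‖M d - M d'‖ ≤ Δ)
    (ε δ : ℝ) (hε : 0 < ε) (hδ0 : 0 < δ) (hδ : δ < 1 / 2)
    (q : ℝ) (hq : gaussQ q = δ)
    (σ : ℝ) (hσpos : 0 < σ)
    (hσ : Δ / (Real.sqrt (q ^ 2 + 2 * ε) - q) ≤ σ) :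
    ∀ S : Set (EuclideanSpace ℝ (Fin n)), MeasurableSet S →
      ∀ d d' : D, Adj d d' →
        gaussNoise n σ {x | M d + x ∈ S} ≤
          ENNReal.ofReal (Real.exp ε) * gaussNoise n σ {x | M d' + x ∈ S} +
            ENNReal.ofReal δ :=
  gaussian_mechanism_dp_general Adj M Δ hΔ ε δ hε q hq σ hσpos hσ
end

section
/- Sequential composition: if mechanism M_t is (ε_t, δ_t)-differentially private for each t ∈ ℕ (adaptively composed), and ∑_t ε_t < ∞ and ∑_t δ_t < ∞, then the infinite composed mechanism is (∑_t ε_t, ∑_t δ_t)-differentially private. -/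
/-!
Call `μ` `(a, b)`-indistinguishable from `ν` if `μ S ≤ a * ν S + b` for all measurable `S`. By the
layer cake formula this extends from sets to measurable test functions with values in `[0, 1]`.
If the histories are `(a, b)`-indistinguishable and each next step is `(a', b')`-indistinguishable,
then `κ h S ≤ min 1 (a' * η h S) + b'`; integrating over the histories and testing the history bound
on the truncated function gives `(a * a', b + b')` for the extended trajectories. Induction on the
horizon multiplies the `e^{ε t}` and adds the `δ t`.
-/

open MeasureTheory

/-- Adaptive sequential composition of mechanisms: at step `t`, mechanism `M t`
sees the database and the outputs of steps `0, …, t-1` and outputs an element of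
`O`; the composed mechanism over horizon `T` is the resulting distribution of the
output trajectory. -/
noncomputable def composedMech {D O : Type*} [MeasurableSpace O]
    (M : (t : ℕ) → D → (Fin t → O) → Measure O) : (T : ℕ) → D → Measure (Fin T → O)
  | 0, _ => Measure.dirac (fun i => i.elim0)
  | T + 1, d => (composedMech M T d).bind fun h => (M T d h).map (Fin.snoc h)

open ENNReal Set ProbabilityTheory

section

variable {α β : Type*} [MeasurableSpace α] [MeasurableSpace β]

/-- One-sided `(ε, δ)`-indistinguishability of `μ` from `ν`, with `a = e^ε` and `b = δ`. -/
def Indistinguishable (a b : ℝ≥0∞) (μ ν : Measure α) : Prop :=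
  ∀ S, MeasurableSet S → μ S ≤ a * ν S + b

namespace Indistinguishable

variable {a b a' b' : ℝ≥0∞} {μ ν : Measure α}

theorem lintegral_le (h : Indistinguishable a b μ ν) {g : α → ℝ≥0∞} (hg : Measurable g)
    (hg_le : ∀ x, g x ≤ 1) : ∫⁻ x, g x ∂μ ≤ a * ∫⁻ x, g x ∂ν + b := by
  set f : α → ℝ := fun x => (g x).toReal
  have hf : Measurable f := hg.ennreal_toReal
  have hf_le : ∀ x, f x ≤ 1 := fun x => toReal_le_of_le_ofReal zero_le_one (by simpa using hg_le x)
  have layer_cake : ∀ m : Measure α, ∫⁻ x, g x ∂m = ∫⁻ t in Ioi 0, m {x | t < f x} := fun m => by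
    rw [← lintegral_eq_lintegral_meas_lt m (ae_of_all _ fun _ => toReal_nonneg) hf.aemeasurable]
    exact lintegral_congr fun x => (ofReal_toReal ((hg_le x).trans_lt one_lt_top).ne).symm
  have hν : Measurable fun t : ℝ => ν {x | t < f x} :=
    Antitone.measurable fun s t hst => measure_mono fun x hx => hst.trans_lt hx
  have hb : Measurable ((Ioc (0 : ℝ) 1).indicator fun _ => b) :=
    measurable_const.indicator measurableSet_Ioc
  have levelwise : ∀ t ∈ Ioi (0 : ℝ),
      μ {x | t < f x} ≤ a * ν {x | t < f x} + (Ioc (0 : ℝ) 1).indicator (fun _ => b) t := by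
    intro t ht
    by_cases ht1 : t ≤ 1
    · rw [indicator_of_mem (show t ∈ Ioc 0 1 from ⟨ht, ht1⟩)]
      exact h _ (measurableSet_lt measurable_const hf)
    · have : {x | t < f x} = ∅ :=
        eq_empty_of_forall_notMem fun x hx => ht1 ((le_of_lt hx).trans (hf_le x))
      simp [this]
  calc ∫⁻ x, g x ∂μ = ∫⁻ t in Ioi 0, μ {x | t < f x} := layer_cake μ
    _ ≤ ∫⁻ t in Ioi 0, (a * ν {x | t < f x} + (Ioc (0 : ℝ) 1).indicator (fun _ => b) t) :=
      setLIntegral_mono ((hν.const_mul a).add hb) levelwise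
    _ = a * ∫⁻ x, g x ∂ν + b := by
      rw [lintegral_add_right _ hb, lintegral_const_mul _ hν, ← layer_cake ν,
        lintegral_indicator_const measurableSet_Ioc, Measure.restrict_apply measurableSet_Ioc,
        inter_eq_self_of_subset_left Ioc_subset_Ioi_self, Real.volume_Ioc]
      simp

theorem map (h : Indistinguishable a b μ ν) {f : α → β} (hf : Measurable f) :
    Indistinguishable a b (μ.map f) (ν.map f) := fun S hS => by
  simpa only [Measure.map_apply hf hS] using h _ (hf hS)

theorem comp [IsProbabilityMeasure μ] {κ η : Kernel α β} [IsMarkovKernel κ]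
    (h : Indistinguishable a b μ ν) (hκη : ∀ x, Indistinguishable a' b' (κ x) (η x)) :
    Indistinguishable (a * a') (b + b') (κ ∘ₘ μ) (η ∘ₘ ν) := by
  intro S hS
  set g : α → ℝ≥0∞ := fun x => min 1 (a' * η x S)
  have hg : Measurable g := measurable_const.min ((η.measurable_coe hS).const_mul a')
  have step : ∀ x, κ x S ≤ g x + b' := fun x =>
    (le_min prob_le_one (hκη x S hS)).trans <| by
      rw [← min_add_add_right]
      exact min_le_min le_self_add le_rfl
  rw [Measure.bind_apply hS κ.aemeasurable, Measure.bind_apply hS η.aemeasurable]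
  calc ∫⁻ x, κ x S ∂μ ≤ ∫⁻ x, g x + b' ∂μ := lintegral_mono step
    _ = ∫⁻ x, g x ∂μ + b' := by
        rw [lintegral_add_right _ measurable_const, lintegral_const, measure_univ, mul_one]
    _ ≤ a * ∫⁻ x, g x ∂ν + b + b' := by
        gcongr
        exact h.lintegral_le hg fun _ => min_le_left _ _
    _ ≤ a * (a' * ∫⁻ x, η x S ∂ν) + b + b' := by
        gcongr
        rw [← lintegral_const_mul _ (η.measurable_coe hS)]
        exact lintegral_mono fun _ => min_le_right _ _
    _ = a * a' * ∫⁻ x, η x S ∂ν + (b + b') := by rw [mul_assoc, add_assoc]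

end Indistinguishable

end

section Composition

variable {D O : Type*} [MeasurableSpace O]

theorem measurable_snoc_uncurry (T : ℕ) :
    Measurable fun p : (Fin T → O) × O => (Fin.snoc p.1 p.2 : Fin (T + 1) → O) := by
  refine measurable_pi_lambda _ fun j => ?_
  induction j using Fin.lastCases with
  | last => simpa only [Fin.snoc_last] using measurable_snd
  | cast i =>
    simp only [Fin.snoc_castSucc]
    exact (measurable_pi_apply i).comp measurable_fst

theorem measurable_snoc {T : ℕ} (h : Fin T → O) :
    Measurable fun o : O => (Fin.snoc h o : Fin (T + 1) → O) :=
  (measurable_snoc_uncurry T).comp measurable_prodMk_left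

noncomputable def snocKernel {T : ℕ} (κ : Kernel (Fin T → O) O) [IsSFiniteKernel κ] :
    Kernel (Fin T → O) (Fin (T + 1) → O) where
  toFun h := (κ h).map (Fin.snoc h)
  measurable' := by
    refine Measure.measurable_of_measurable_coe _ fun S hS => ?_
    simp only [Measure.map_apply (measurable_snoc _) hS]
    exact Kernel.measurable_kernel_prodMk_left (measurable_snoc_uncurry T hS)

instance {T : ℕ} (κ : Kernel (Fin T → O) O) [IsMarkovKernel κ] : IsMarkovKernel (snocKernel κ) :=
  ⟨fun h => Measure.isProbabilityMeasure_map (measurable_snoc h).aemeasurable⟩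

variable (κ : (t : ℕ) → D → Kernel (Fin t → O) O) [∀ t d, IsMarkovKernel (κ t d)]

theorem composedMech_succ (T : ℕ) (d : D) :
    composedMech (fun t d => κ t d) (T + 1) d =
      snocKernel (κ T d) ∘ₘ composedMech (fun t d => κ t d) T d :=
  rfl

instance isProbabilityMeasure_composedMech (T : ℕ) (d : D) :
    IsProbabilityMeasure (composedMech (fun t d => κ t d) T d) := by
  induction T with
  | zero => exact Measure.dirac.isProbabilityMeasure
  | succ T ih =>
    rw [composedMech_succ]
    infer_instance

theorem indistinguishable_composedMech {a b : ℕ → ℝ≥0∞} {d d' : D}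
    (hstep : ∀ t h, Indistinguishable (a t) (b t) (κ t d h) (κ t d' h)) (T : ℕ) :
    Indistinguishable (∏ t ∈ Finset.range T, a t) (∑ t ∈ Finset.range T, b t)
      (composedMech (fun t d => κ t d) T d) (composedMech (fun t d => κ t d) T d') := by
  induction T with
  | zero => intro S _; simp [composedMech]
  | succ T ih =>
    rw [Finset.prod_range_succ, Finset.sum_range_succ, composedMech_succ, composedMech_succ]
    exact ih.comp fun h => (hstep T h).map (measurable_snoc h)

end Composition

theorem adaptive_sequential_composition_general {D O : Type*} [MeasurableSpace O]
    (Adj : D → D → Prop)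
    (M : (t : ℕ) → D → (Fin t → O) → Measure O)
    (hprob : ∀ t d h, IsProbabilityMeasure (M t d h))
    (hker : ∀ t d, ∀ S : Set O, MeasurableSet S → Measurable fun h => M t d h S)
    (ε δ : ℕ → ℝ) (hδ : ∀ t, 0 ≤ δ t)
    (hDP : ∀ t (h : Fin t → O) (d d' : D), Adj d d' →
      ∀ S : Set O, MeasurableSet S →
        M t d h S ≤ ENNReal.ofReal (Real.exp (ε t)) * M t d' h S +
          ENNReal.ofReal (δ t))
    (T : ℕ) :
    ∀ d d' : D, Adj d d' → ∀ S : Set (Fin T → O), MeasurableSet S →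
      composedMech M T d S ≤
        ENNReal.ofReal (Real.exp (∑ t ∈ Finset.range T, ε t)) *
            composedMech M T d' S +
          ENNReal.ofReal (∑ t ∈ Finset.range T, δ t) := by
  intro d d' hdd' S hS
  let κ t d : Kernel (Fin t → O) O := ⟨M t d, Measure.measurable_measure.mpr (hker t d)⟩
  have : ∀ t d, IsMarkovKernel (κ t d) := fun t d => ⟨hprob t d⟩
  rw [Real.exp_sum, ofReal_prod_of_nonneg fun t _ => (Real.exp_pos _).le,
    ofReal_sum_of_nonneg fun t _ => hδ t]
  exact indistinguishable_composedMech κ (fun t h => hDP t h d d' hdd') T S hS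

/-- Adaptive sequential composition theorem: if each adaptively chosen mechanism
`M t` is `(ε t, δ t)`-differentially private (for every observed history), then the
composition over horizon `T` is `(∑_{t<T} ε t, ∑_{t<T} δ t)`-differentially
private. -/
theorem adaptive_sequential_composition {D O : Type*} [MeasurableSpace O]
    (Adj : D → D → Prop) (hAdj : Symmetric Adj)
    (M : (t : ℕ) → D → (Fin t → O) → Measure O)
    (hprob : ∀ t d h, IsProbabilityMeasure (M t d h))
    (hker : ∀ t d, ∀ S : Set O, MeasurableSet S → Measurable fun h => M t d h S)
    (ε δ : ℕ → ℝ) (hε : ∀ t, 0 ≤ ε t) (hδ : ∀ t, 0 ≤ δ t)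
    (hDP : ∀ t (h : Fin t → O) (d d' : D), Adj d d' →
      ∀ S : Set O, MeasurableSet S →
        M t d h S ≤ ENNReal.ofReal (Real.exp (ε t)) * M t d' h S +
          ENNReal.ofReal (δ t))
    (T : ℕ) :
    ∀ d d' : D, Adj d d' → ∀ S : Set (Fin T → O), MeasurableSet S →
      composedMech M T d S ≤
        ENNReal.ofReal (Real.exp (∑ t ∈ Finset.range T, ε t)) *
            composedMech M T d' S +
          ENNReal.ofReal (∑ t ∈ Finset.range T, δ t) :=
  adaptive_sequential_composition_general Adj M hprob hker ε δ hδ hDP T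
end

section
/- Under adjacency where only one edge's reference d_{l_k} changes by at most θ in ℓ¹ norm, the ℓ²-sensitivity of the one-step LQR update mechanism M_t(D) = (x_1(t+1),…,x_N(t+1)) with x_i(t+1) = x_i(t) + c(t) K_{i,t} ∑_{j∈N_i} a_{ij}(x̂_{ij}(t) + d_{ij} − x_i(t)) satisfies Δ_{2,M,t} ≤ 2 c(t) ρ_K θ, where ρ_K = max_i ‖K_{i,t}‖. -/
/-!
Only the references on the edge `(i₀, j₀)` change, so the difference of the two updates vanishes
except at agents `i₀` and `j₀`, where it is `c K_i (a_{ij} (±δ))` with `δ = d_{i₀j₀} - d'_{i₀j₀}`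
(antisymmetry of the references gives the sign at `j₀`). Each of these two rows has norm at most
`c ρ_K ‖δ‖₂ ≤ c ρ_K ‖δ‖₁ ≤ c ρ_K θ`, so the `ℓ²` norm of the whole difference is at most
`√2 c ρ_K θ ≤ 2 c ρ_K θ`.
-/

open Finset

theorem PiLp.norm_le_sum_norm {ι : Type*} [Fintype ι] {β : ι → Type*}
    [∀ i, SeminormedAddCommGroup (β i)] (x : PiLp 2 β) : ‖x‖ ≤ ∑ i, ‖x i‖ := by
  rw [PiLp.norm_eq_of_L2, Real.sqrt_le_left (sum_nonneg fun i _ ↦ norm_nonneg _)]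
  exact sum_sq_le_sq_sum_of_nonneg fun i _ ↦ norm_nonneg _

theorem EuclideanSpace.norm_le_sum_abs {ι : Type*} [Fintype ι] (v : EuclideanSpace ℝ ι) :
    ‖v‖ ≤ ∑ i, |v i| :=
  PiLp.norm_le_sum_norm v

theorem norm_sum_smul_le_of_eq_zero_of_ne {ι E : Type*} [Fintype ι] [SeminormedAddCommGroup E]
    [NormedSpace ℝ E] (a : ι → ℝ) (w : ι → E) (k : ι) (ha : |a k| ≤ 1)
    (hw : ∀ j, j ≠ k → w j = 0) : ‖∑ j, a j • w j‖ ≤ ‖w k‖ := by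
  rw [sum_eq_single k (fun j _ hj ↦ by simp [hw j hj]) (by simp), norm_smul, Real.norm_eq_abs]
  exact mul_le_of_le_one_left (norm_nonneg _) ha

theorem exists_norm_le_of_eq_zero_off_edge {ι E : Type*} [SeminormedAddCommGroup E]
    (e : ι → ι → E) (hanti : ∀ i j, e j i = -e i j) (i₀ j₀ : ι)
    (hoff : ∀ i j, ¬((i = i₀ ∧ j = j₀) ∨ (i = j₀ ∧ j = i₀)) → e i j = 0) (i : ι) :
    ∃ k, (∀ j, j ≠ k → e i j = 0) ∧ ‖e i k‖ ≤ ‖e i₀ j₀‖ := by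
  by_cases hi : i = i₀
  · subst hi
    exact ⟨j₀, fun j hj ↦ hoff _ _ (by grind), le_rfl⟩
  refine ⟨i₀, fun j hj ↦ hoff _ _ (by grind), ?_⟩
  by_cases hj : i = j₀
  · rw [hj, hanti, norm_neg]
  · rw [hoff i i₀ (by grind), norm_zero]
    exact norm_nonneg _

theorem sqrt_sum_sq_norm_le_of_eq_zero_off_pair {ι E : Type*} [Fintype ι]
    [SeminormedAddCommGroup E] (v : ι → E) (p q : ι) {B : ℝ} (hB : ∀ i, ‖v i‖ ≤ B)
    (hv : ∀ i, i ≠ p → i ≠ q → v i = 0) : √(∑ i, ‖v i‖ ^ 2) ≤ 2 * B := by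
  classical
  have hB₀ : 0 ≤ B := (norm_nonneg _).trans (hB p)
  have hsupp : ∑ i, ‖v i‖ ^ 2 = ∑ i ∈ {p, q}, ‖v i‖ ^ 2 := by
    refine (sum_subset (subset_univ _) fun i _ hi ↦ ?_).symm
    simp only [mem_insert, mem_singleton, not_or] at hi
    simp [hv i hi.1 hi.2]
  have hsum : ∑ i ∈ {p, q}, ‖v i‖ ^ 2 ≤ 2 * B ^ 2 := calc
    _ ≤ #{p, q} • B ^ 2 :=
      sum_le_card_nsmul _ _ _ fun i _ ↦ pow_le_pow_left₀ (norm_nonneg _) (hB i) 2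
    _ ≤ 2 * B ^ 2 := by rw [nsmul_eq_mul]; gcongr; exact_mod_cast card_le_two
  rw [Real.sqrt_le_iff, hsupp]
  constructor <;> nlinarith

section LQR

variable {ι E : Type*} [Fintype ι] [SeminormedAddCommGroup E] [NormedSpace ℝ E]

def lqrStep (c : ℝ) (K : ι → E →L[ℝ] E) (a : ι → ι → ℝ) (x : ι → E) (xhat d : ι → ι → E)
    (i : ι) : E :=
  x i + c • K i (∑ j, a i j • (xhat i j + d i j - x i))

theorem lqrStep_sub_lqrStep (c : ℝ) (K : ι → E →L[ℝ] E) (a : ι → ι → ℝ) (x : ι → E)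
    (xhat d d' : ι → ι → E) (i : ι) :
    lqrStep c K a x xhat d i - lqrStep c K a x xhat d' i =
      c • K i (∑ j, a i j • (d i j - d' i j)) := by
  simp only [lqrStep, add_sub_add_left_eq_sub, ← smul_sub, ← map_sub, ← sum_sub_distrib,
    sub_sub_sub_cancel_right]

theorem norm_smul_apply_le {c ρ θ : ℝ} (hc : 0 ≤ c) {T : E →L[ℝ] E} (hT : ‖T‖ ≤ ρ) {v : E}
    (hv : ‖v‖ ≤ θ) : ‖c • T v‖ ≤ c * ρ * θ := by
  rw [norm_smul, Real.norm_eq_abs, abs_of_nonneg hc, mul_assoc]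
  gcongr
  exact (T.le_opNorm v).trans (by gcongr; exact (norm_nonneg _).trans hT)

end LQR

theorem lqr_step_sensitivity_general {n N : ℕ}
    (c θ ρK : ℝ) (hc : 0 < c)
    (K : Fin N → (EuclideanSpace ℝ (Fin n) →L[ℝ] EuclideanSpace ℝ (Fin n)))
    (hK : ∀ i, ‖K i‖ ≤ ρK)
    (a : Fin N → Fin N → ℝ) (ha : ∀ i j, a i j = 0 ∨ a i j = 1)
    (x : Fin N → EuclideanSpace ℝ (Fin n))
    (xhat : Fin N → Fin N → EuclideanSpace ℝ (Fin n))
    (d d' : Fin N → Fin N → EuclideanSpace ℝ (Fin n))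
    (hanti : ∀ i j, d j i = -d i j) (hanti' : ∀ i j, d' j i = -d' i j)
    (i0 j0 : Fin N)
    (hsame : ∀ i j, ¬((i = i0 ∧ j = j0) ∨ (i = j0 ∧ j = i0)) → d i j = d' i j)
    (hθbound : ∑ k : Fin n, |d i0 j0 k - d' i0 j0 k| ≤ θ) :
    Real.sqrt (∑ i : Fin N,
        ‖(x i + c • K i (∑ j : Fin N, a i j • (xhat i j + d i j - x i))) -
          (x i + c • K i (∑ j : Fin N, a i j • (xhat i j + d' i j - x i)))‖ ^ 2) ≤
      2 * c * ρK * θ := by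
  have hδ : ‖d i0 j0 - d' i0 j0‖ ≤ θ := (EuclideanSpace.norm_le_sum_abs _).trans hθbound
  have hoff : ∀ i j, ¬((i = i0 ∧ j = j0) ∨ (i = j0 ∧ j = i0)) → d i j - d' i j = 0 :=
    fun i j h ↦ sub_eq_zero.2 (hsame i j h)
  have hanti_sub : ∀ i j, d j i - d' j i = -(d i j - d' i j) := fun i j ↦ by
    rw [hanti, hanti', neg_sub_neg, neg_sub]
  have ha_abs : ∀ i j, |a i j| ≤ 1 := fun i j ↦ by rcases ha i j with h | h <;> simp [h]
  have hrow : ∀ i, ‖lqrStep c K a x xhat d i - lqrStep c K a x xhat d' i‖ ≤ c * ρK * θ := by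
    intro i
    obtain ⟨k, hk_supp, hk⟩ := exists_norm_le_of_eq_zero_off_edge _ hanti_sub i0 j0 hoff i
    rw [lqrStep_sub_lqrStep]
    exact norm_smul_apply_le hc.le (hK i)
      ((norm_sum_smul_le_of_eq_zero_of_ne _ _ k (ha_abs i k) hk_supp).trans (hk.trans hδ))
  have hzero : ∀ i, i ≠ i0 → i ≠ j0 →
      lqrStep c K a x xhat d i - lqrStep c K a x xhat d' i = 0 := by
    intro i hi hj
    rw [lqrStep_sub_lqrStep, sum_eq_zero fun j _ ↦ by rw [hoff i j (by grind), smul_zero],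
      map_zero, smul_zero]
  rw [show 2 * c * ρK * θ = 2 * (c * ρK * θ) by ring]
  exact sqrt_sum_sq_norm_le_of_eq_zero_off_pair _ i0 j0 hrow hzero

/-- Sensitivity of the one-step LQR update: if the two databases of references
`d, d'` differ only in the single edge `(i0, j0)` (and its reverse, with the
antisymmetry convention `d j i = -d i j`), by at most `θ` in `ℓ¹` norm, then the
`ℓ²`-sensitivity of the update
`x_i ↦ x_i + c K_i ∑_j a_{ij}(x̂_{ij} + d_{ij} − x_i)` is at most `2 c ρ_K θ`. -/
theorem lqr_step_sensitivity {n N : ℕ}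
    (c θ ρK : ℝ) (hc : 0 < c) (hθ : 0 ≤ θ)
    (K : Fin N → (EuclideanSpace ℝ (Fin n) →L[ℝ] EuclideanSpace ℝ (Fin n)))
    (hK : ∀ i, ‖K i‖ ≤ ρK)
    (a : Fin N → Fin N → ℝ) (ha : ∀ i j, a i j = 0 ∨ a i j = 1)
    (x : Fin N → EuclideanSpace ℝ (Fin n))
    (xhat : Fin N → Fin N → EuclideanSpace ℝ (Fin n))
    (d d' : Fin N → Fin N → EuclideanSpace ℝ (Fin n))
    (hanti : ∀ i j, d j i = -d i j) (hanti' : ∀ i j, d' j i = -d' i j)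
    (i0 j0 : Fin N) (hne : i0 ≠ j0)
    (hsame : ∀ i j, ¬((i = i0 ∧ j = j0) ∨ (i = j0 ∧ j = i0)) → d i j = d' i j)
    (hθbound : ∑ k : Fin n, |d i0 j0 k - d' i0 j0 k| ≤ θ) :
    Real.sqrt (∑ i : Fin N,
        ‖(x i + c • K i (∑ j : Fin N, a i j • (xhat i j + d i j - x i))) -
          (x i + c • K i (∑ j : Fin N, a i j • (xhat i j + d' i j - x i)))‖ ^ 2) ≤
      2 * c * ρK * θ :=
  lqr_step_sensitivity_general c θ ρK hc K hK a ha x xhat d d' hanti hanti' i0 j0 hsame hθbound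
end
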